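/- (Corollary 2, single buyer.) Let S be a nonempty finite index set of selling prosumers with parameters a_{i,s} > 0, b_{i,s} ∈ ℝ, P̄_{i,s} > 0, and let there be a single buying prosumer with parameters a_b > 0, b_b ∈ ℝ and power lower bound P̲_b < 0. Let λ̲ < λ̄ and k > 1. Suppose: λ̲ ≤ b_{i,s} < λ̲ + (λ̄−λ̲)/k < b_b ≤ λ̄ for every i ∈ S; a_{i,s} > (λ̄−λ̲)/(2 P̄_{i,s}) for every i ∈ S; and (λ̄−λ̲)/(−2 P̲_b) < a_b ≤ (k b_b − (k−1)λ̲ − λ̄)/(2 Σ_{i∈S} P̄_{i,s}). Then strict feasibility holds: P̲_b < P*_b < 0 for the buyer and 0 < P*_{i,s} < P̄_{i,s} for every seller i ∈ S, where λ* = (b_b/a_b + Σ_{i∈S} b_{i,s}/a_{i,s})/(1/a_b + Σ_{i∈S} 1/a_{i,s}), P*_b = (λ* − b_b)/(2 a_b), and P*_{i,s} = (λ* − b_{i,s})/(2 a_{i,s}). -/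

import Mathlib

/-!
Clearing the denominator of `λ*` shows that `(c - λ*) * (1/a_b + ∑ 1/a_{i,s})` is the excess
`(c - b_b)/a_b + ∑ (c - b_{i,s})/a_{i,s}`, i.e. twice the net trading power at the price `c`;
so `c < λ*` iff this excess is negative. At `c = b_b` it is positive, so `λ* < b_b`. At
`c = m := λ̲ + (λ̄ - λ̲)/k` the bound on `a_{i,s}` makes each seller's term less than
`2 P̄_{i,s} / k`, and the upper bound on `a_b` makes the buyer's term at most `-2 ∑ P̄_{i,s} / k`,
so `m < λ*`. Hence `b_{i,s} < m < λ* < b_b ≤ λ̄` and `λ̲ ≤ λ*`, and the lower bounds on the `a`'s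
turn `|λ* - b| ≤ λ̄ - λ̲` into the strict power limits.
-/

open Finset

section ClearingPrice

variable {ι : Type*} (S : Finset ι) (as bs : ι → ℝ) (a_b b_b : ℝ)

noncomputable def clearingPrice : ℝ :=
  (b_b / a_b + ∑ i ∈ S, bs i / as i) / (1 / a_b + ∑ i ∈ S, 1 / as i)

variable {S as a_b}

lemma clearingPrice_weight_pos (hab : 0 < a_b) (has : ∀ i ∈ S, 0 < as i) :
    0 < 1 / a_b + ∑ i ∈ S, 1 / as i :=
  add_pos_of_pos_of_nonneg (by positivity)
    (sum_nonneg fun i hi => (one_div_pos.2 (has i hi)).le)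

lemma excess_eq_sub_clearingPrice_mul (hab : 0 < a_b) (has : ∀ i ∈ S, 0 < as i) (c : ℝ) :
    (c - b_b) / a_b + ∑ i ∈ S, (c - bs i) / as i
      = (c - clearingPrice S as bs a_b b_b) * (1 / a_b + ∑ i ∈ S, 1 / as i) := by
  rw [clearingPrice, sub_mul, div_mul_cancel₀ _ (clearingPrice_weight_pos hab has).ne',
    mul_add, mul_sum]
  simp only [sub_div, sum_sub_distrib, mul_one_div]
  ring

lemma lt_clearingPrice_iff (hab : 0 < a_b) (has : ∀ i ∈ S, 0 < as i) (c : ℝ) :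
    c < clearingPrice S as bs a_b b_b ↔ (c - b_b) / a_b + ∑ i ∈ S, (c - bs i) / as i < 0 := by
  rw [excess_eq_sub_clearingPrice_mul bs b_b hab has, ← neg_pos, ← neg_mul,
    mul_pos_iff_of_pos_right (clearingPrice_weight_pos hab has), neg_pos, sub_neg]

lemma clearingPrice_lt_iff (hab : 0 < a_b) (has : ∀ i ∈ S, 0 < as i) (c : ℝ) :
    clearingPrice S as bs a_b b_b < c ↔ 0 < (c - b_b) / a_b + ∑ i ∈ S, (c - bs i) / as i := by
  rw [excess_eq_sub_clearingPrice_mul bs b_b hab has,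
    mul_pos_iff_of_pos_right (clearingPrice_weight_pos hab has), sub_pos]

lemma clearingPrice_lt_of_forall_lt (hS : S.Nonempty) (hab : 0 < a_b)
    (has : ∀ i ∈ S, 0 < as i) (hbs : ∀ i ∈ S, bs i < b_b) :
    clearingPrice S as bs a_b b_b < b_b := by
  refine (clearingPrice_lt_iff bs b_b hab has b_b).2 ?_
  rw [sub_self, zero_div, zero_add]
  exact sum_pos (fun i hi => div_pos (sub_pos.2 (hbs i hi)) (has i hi)) hS

end ClearingPrice

noncomputable def tradingPower (a b lam : ℝ) : ℝ := (lam - b) / (2 * a)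

lemma lt_tradingPower_of_cost_gt {a b lam P d : ℝ} (ha : 0 < a) (hP : P < 0)
    (hcost : d / (-2 * P) < a) (hlam : b - d ≤ lam) : P < tradingPower a b lam := by
  have hspread : d < a * (-2 * P) := (div_lt_iff₀ (by linarith)).1 hcost
  rw [tradingPower, lt_div_iff₀ (by positivity)]
  linarith

lemma tradingPower_lt_of_cost_gt {a b lam P d : ℝ} (ha : 0 < a) (hP : 0 < P)
    (hcost : d / (2 * P) < a) (hlam : lam ≤ b + d) : tradingPower a b lam < P := by
  have hspread : d < a * (2 * P) := (div_lt_iff₀ (by linarith)).1 hcost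
  rw [tradingPower, div_lt_iff₀ (by positivity)]
  linarith

lemma seller_excess_lt_of_cost_gt {a b P lamL lamU k : ℝ} (hk : 0 < k) (ha : 0 < a) (hP : 0 < P)
    (hb : lamL ≤ b) (hcost : (lamU - lamL) / (2 * P) < a) :
    (lamL + (lamU - lamL) / k - b) / a < 2 / k * P := by
  have hspread : lamU - lamL < 2 * P * a := (div_lt_iff₀' (by positivity)).1 hcost
  rw [div_lt_iff₀ ha]
  calc lamL + (lamU - lamL) / k - b ≤ (lamU - lamL) / k := by linarith
    _ < 2 * P * a / k := div_lt_div_of_pos_right hspread hk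
    _ = 2 / k * P * a := by ring

lemma buyer_excess_le_of_cost_le {a b P lamL lamU k : ℝ} (hk : 0 < k) (ha : 0 < a) (hP : 0 < P)
    (hcost : a ≤ (k * b - (k - 1) * lamL - lamU) / (2 * P)) :
    2 / k * P ≤ (b - (lamL + (lamU - lamL) / k)) / a := by
  have hkm : k * b - (k - 1) * lamL - lamU = k * (b - (lamL + (lamU - lamL) / k)) := by
    field_simp
    ring
  rw [hkm, le_div_iff₀ (by positivity)] at hcost
  rw [le_div_iff₀ ha, show 2 / k * P * a = a * (2 * P) / k by ring, div_le_iff₀' hk]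
  exact hcost

/-- Corollary 2 (single buyer): parameter selection rules that guarantee strict
feasibility when there is one buying prosumer and finitely many selling prosumers. -/
theorem coro2_single_buyer {ι : Type*} (S : Finset ι) (hS : S.Nonempty)
    (as bs Ps : ι → ℝ)
    (has : ∀ i ∈ S, 0 < as i) (hPs : ∀ i ∈ S, 0 < Ps i)
    (a_b b_b P_b : ℝ) (hab : 0 < a_b) (hPb : P_b < 0)
    (lamL lamU k : ℝ) (hlamLU : lamL < lamU) (hk : k > 1)
    (lam : ℝ)
    (hlam : lam = (b_b / a_b + ∑ i ∈ S, bs i / as i) / (1 / a_b + ∑ i ∈ S, 1 / as i))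
    (hbs : ∀ i ∈ S, lamL ≤ bs i ∧ bs i < lamL + (lamU - lamL) / k)
    (hbb : lamL + (lamU - lamL) / k < b_b ∧ b_b ≤ lamU)
    (has2 : ∀ i ∈ S, as i > (lamU - lamL) / (2 * Ps i))
    (hab2 : (lamU - lamL) / (-2 * P_b) < a_b ∧
            a_b ≤ (k * b_b - (k - 1) * lamL - lamU) / (2 * ∑ i ∈ S, Ps i)) :
    (P_b < (lam - b_b) / (2 * a_b) ∧ (lam - b_b) / (2 * a_b) < 0) ∧
    (∀ i ∈ S, 0 < (lam - bs i) / (2 * as i) ∧ (lam - bs i) / (2 * as i) < Ps i) := by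
  obtain ⟨hbb_low, hbb_up⟩ := hbb
  obtain ⟨hab_low, hab_up⟩ := hab2
  set m := lamL + (lamU - lamL) / k
  have hk0 : 0 < k := by linarith
  have hLm : lamL ≤ m := le_add_of_nonneg_right (div_nonneg (sub_nonneg.2 hlamLU.le) hk0.le)
  have hm_lt : m < lam := by
    rw [hlam]
    refine (lt_clearingPrice_iff bs b_b hab has m).2 ?_
    have hsellers : ∑ i ∈ S, (m - bs i) / as i < 2 / k * ∑ i ∈ S, Ps i := by
      rw [mul_sum]
      exact sum_lt_sum_of_nonempty hS fun i hi =>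
        seller_excess_lt_of_cost_gt hk0 (has i hi) (hPs i hi) (hbs i hi).1 (has2 i hi)
    have hbuyer := buyer_excess_le_of_cost_le hk0 hab (sum_pos hPs hS) hab_up
    have hneg : (m - b_b) / a_b = -((b_b - m) / a_b) := by ring
    linarith
  have hlam_lt : lam < b_b :=
    hlam ▸ clearingPrice_lt_of_forall_lt bs b_b hS hab has fun i hi => (hbs i hi).2.trans hbb_low
  refine ⟨⟨lt_tradingPower_of_cost_gt hab hPb hab_low (by linarith),
    div_neg_of_neg_of_pos (by linarith) (by linarith)⟩, fun i hi => ⟨?_, ?_⟩⟩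
  · exact div_pos (by linarith [(hbs i hi).2]) (by linarith [has i hi])
  · exact tradingPower_lt_of_cost_gt (has i hi) (hPs i hi) (has2 i hi)
      (by linarith [(hbs i hi).1])
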